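/- arXiv:1702.08767 — 2 statements merged into one kernel-verified Lean document; each statement's English description precedes it below -/
import Mathlib

section
/- Let $v_1,\dots,v_N \in \mathbb{R}^N$ be linearly independent and $G = \sum_{k=1}^N \mathbb{Z} v_k$. For every $\rho \ge \sum_{k=1}^N |v_k|$ and every $x, x' \in G$ with $|x - x'| < \rho$, there exist $n \in \mathbb{N}$ and points $w_0, \dots, w_n \in B_{4^{N-1}\rho}(x')$ such that $w_0 = x'$, $w_n = x$, and $w_\ell - w_{\ell-1} \in \{\pm v_1, \dots, \pm v_N\}$ for $\ell = 1, \dots, n$. -/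
open Metric Finset

/-!
Induction on the number of generators. Write the target as `X = Y + K • u` with `u = ± v i`,
`K = |c i| ≥ 1` and `Y` in the lattice of the remaining generators, whose lengths sum to `σ`.
Rounding the coefficients of `(j / K) • Y` gives lattice points `p j` within `σ / 2` of it, so
`y j = p j + j • u` stays within `σ / 2` of `(j / K) • X`. From `y j` one reaches `y (j + 1)` by the
step `u` followed by a path, given by induction, for `p (j + 1) - p j`, a vector of length
`< σ + ‖X‖ + ‖u‖ ≤ 2 ρ`. Each generator thus doubles `ρ` and adds `2 ρ`, whence the factor `4`.
For a single generator the points `j • u` lie on the segment `[0, X]`, which gives the bound `ρ`.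
-/

open Relation

theorem Relation.ReflTransGen.exists_seq {α : Type*} {r : α → α → Prop} {a b : α}
    (h : ReflTransGen r a b) :
    ∃ (n : ℕ) (w : ℕ → α), w 0 = a ∧ w n = b ∧ ∀ ℓ < n, r (w ℓ) (w (ℓ + 1)) := by
  induction h with
  | refl => exact ⟨0, fun _ => a, rfl, rfl, by simp⟩
  | @tail b c _ hbc ih =>
    obtain ⟨n, w, hw0, hwn, hw⟩ := ih
    refine ⟨n + 1, Function.update w (n + 1) c, by simp [hw0], by simp, fun ℓ hℓ => ?_⟩
    rcases Nat.lt_succ_iff_lt_or_eq.mp hℓ with hℓ | rfl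
    · simpa [Function.update_of_ne (by omega : ℓ ≠ n + 1), Function.update_of_ne
        (by omega : ℓ + 1 ≠ n + 1)] using hw ℓ hℓ
    · simpa [hwn] using hbc

theorem Relation.reflTransGen_of_forall_lt_succ {α : Type*} {r : α → α → Prop} {y : ℕ → α}
    {n : ℕ} (h : ∀ j < n, ReflTransGen r (y j) (y (j + 1))) : ReflTransGen r (y 0) (y n) := by
  induction n with
  | zero => exact .refl
  | succ n ih => exact (ih fun j hj => h j (by omega)).trans (h n n.lt_succ_self)

section

variable {ι E : Type*} [NormedAddCommGroup E]

/-- `ReflTransGen (LatticeStep v s) a b` is a path from `a` to `b` with steps `± v k` whose points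
other than `a` lie in `s`. -/
def LatticeStep (v : ι → E) (s : Set E) (a b : E) : Prop :=
  b ∈ s ∧ ∃ k, b - a = v k ∨ b - a = -v k

theorem LatticeStep.mono (v : ι → E) {s t : Set E} (hst : s ⊆ t) {a b : E}
    (h : LatticeStep v s a b) : LatticeStep v t a b :=
  ⟨hst h.1, h.2⟩

theorem latticeStep_add (v : ι → E) {s : Set E} {a u : E} (ha : a + u ∈ s)
    (hu : ∃ k, u = v k ∨ u = -v k) : LatticeStep v s a (a + u) :=
  ⟨ha, by simpa using hu⟩

variable [NormedSpace ℝ E]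

theorem norm_sum_round_smul_sub_le (v : ι → E) (S : Finset ι) (c : ι → ℤ) (t : ℝ) :
    ‖∑ k ∈ S, (round (t * c k) : ℝ) • v k - t • ∑ k ∈ S, (c k : ℝ) • v k‖ ≤
      (∑ k ∈ S, ‖v k‖) / 2 := by
  rw [smul_sum, ← sum_sub_distrib, sum_div]
  refine (norm_sum_le _ _).trans (sum_le_sum fun k _ => ?_)
  rw [smul_smul, ← sub_smul, norm_smul, Real.norm_eq_abs, abs_sub_comm, div_eq_inv_mul]
  gcongr
  simpa using abs_sub_round (t * c k)

theorem exists_natCast_smul_eq_intCast_smul {c : ℤ} (hc : c ≠ 0) (x : E) :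
    ∃ K : ℕ, 0 < K ∧ ∃ u, (u = x ∨ u = -x) ∧ (c : ℝ) • x = (K : ℝ) • u := by
  refine ⟨c.natAbs, Int.natAbs_pos.mpr hc, ?_⟩
  rcases Int.natAbs_eq c with h | h
  · exact ⟨x, .inl rfl, by rw [h]; simp⟩
  · exact ⟨-x, .inr rfl, by rw [h]; simp⟩

theorem reflTransGen_latticeStep_add_smul (v : ι → E) {u : E} (hu : ∃ k, u = v k ∨ u = -v k)
    (K : ℕ) {ρ : ℝ} (hK : ‖(K : ℝ) • u‖ < ρ) (a : E) :
    ReflTransGen (LatticeStep v (ball a ρ)) a (a + (K : ℝ) • u) := by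
  have hy : ∀ j : ℕ, a + ((j + 1 : ℕ) : ℝ) • u = a + (j : ℝ) • u + u := by
    intro j; push_cast; rw [add_smul, one_smul, add_assoc]
  simpa using reflTransGen_of_forall_lt_succ (y := fun j : ℕ => a + (j : ℝ) • u) (n := K)
    fun j hj => .single <| by
      rw [hy]
      refine latticeStep_add v ?_ hu
      rw [← hy, mem_ball, dist_eq_norm, add_sub_cancel_left]
      refine lt_of_le_of_lt ?_ hK
      simp only [norm_smul, Real.norm_natCast]
      gcongr
      exact_mod_cast hj

theorem reflTransGen_latticeStep_sum_add_smul (v : ι → E) {S : Finset ι} {c : ι → ℤ} {u : E}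
    {K : ℕ} {ρ R : ℝ} (hu : ∃ k, u = v k ∨ u = -v k) (hK : 0 < K) (hR : 0 ≤ R)
    (hρ : ∑ k ∈ S, ‖v k‖ + ‖u‖ ≤ ρ) (hX : ‖∑ k ∈ S, (c k : ℝ) • v k + (K : ℝ) • u‖ < ρ)
    (ih : ∀ (d : ι → ℤ) (b : E), ‖∑ k ∈ S, (d k : ℝ) • v k‖ < 2 * ρ →
      ReflTransGen (LatticeStep v (ball b R)) b (b + ∑ k ∈ S, (d k : ℝ) • v k))
    (a : E) :
    ReflTransGen (LatticeStep v (ball a (2 * ρ + R))) a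
      (a + (∑ k ∈ S, (c k : ℝ) • v k + (K : ℝ) • u)) := by
  set X := ∑ k ∈ S, (c k : ℝ) • v k + (K : ℝ) • u with hXdef
  set σ := ∑ k ∈ S, ‖v k‖
  have hσ : 0 ≤ σ := sum_nonneg fun k _ => norm_nonneg (v k)
  have hK' : (K : ℝ) ≠ 0 := by positivity
  let r : ℕ → ι → ℤ := fun j k => round ((j / K : ℝ) * c k)
  let y : ℕ → E := fun j => a + (∑ k ∈ S, (r j k : ℝ) • v k + (j : ℝ) • u)
  have hy0 : y 0 = a := by simp [y, r]
  have hyK : y K = a + X := by simp [y, r, hK', hXdef]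
  have hdev : ∀ j, ‖(y j - a) - (j / K : ℝ) • X‖ ≤ σ / 2 := by
    intro j
    have : (y j - a) - (j / K : ℝ) • X =
        ∑ k ∈ S, (r j k : ℝ) • v k - (j / K : ℝ) • ∑ k ∈ S, (c k : ℝ) • v k := by
      simp only [y, hXdef, smul_add, smul_smul, div_mul_cancel₀ _ hK']
      abel
    rw [this]
    exact norm_sum_round_smul_sub_le v S c _
  have hfrac : ∀ {t : ℝ}, 0 ≤ t → t ≤ 1 → ‖t • X‖ < ρ := fun h0 h1 => by
    rw [norm_smul_of_nonneg h0]
    exact (mul_le_of_le_one_left (norm_nonneg _) h1).trans_lt hX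
  have hlink : ∀ j < K, ReflTransGen (LatticeStep v (ball a (2 * ρ + R))) (y j) (y (j + 1)) := by
    intro j hj
    set T := ∑ k ∈ S, ((r (j + 1) k - r j k : ℤ) : ℝ) • v k
    have hyT : y (j + 1) = y j + u + T := by
      simp only [y, T, Int.cast_sub, sub_smul, sum_sub_distrib]
      push_cast
      module
    have hnear : ‖y j + u - a‖ < 2 * ρ := by
      have := hfrac (t := j / K) (by positivity)
        ((div_le_one (by positivity)).2 (by exact_mod_cast hj.le))
      calc ‖y j + u - a‖ = ‖((y j - a) - (j / K : ℝ) • X) + (j / K : ℝ) • X + u‖ := by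
            congr 1; abel
        _ ≤ ‖(y j - a) - (j / K : ℝ) • X‖ + ‖(j / K : ℝ) • X‖ + ‖u‖ := norm_add₃_le
        _ < 2 * ρ := by linarith [hdev j]
    have hT : ‖T‖ < 2 * ρ := by
      have hstep : ((j + 1 : ℕ) / K : ℝ) • X = (j / K : ℝ) • X + (1 / K : ℝ) • X := by
        rw [← add_smul]; push_cast; ring_nf
      have := hfrac (t := 1 / K) (by positivity)
        ((div_le_one (by positivity)).2 (by exact_mod_cast hK))
      calc ‖T‖ = ‖((y (j + 1) - a) - ((j + 1 : ℕ) / K : ℝ) • X) - ((y j - a) - (j / K : ℝ) • X)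
            + ((1 / K : ℝ) • X - u)‖ := by
            rw [hstep, hyT]; congr 1; abel
        _ ≤ ‖(y (j + 1) - a) - ((j + 1 : ℕ) / K : ℝ) • X‖ + ‖(y j - a) - (j / K : ℝ) • X‖
            + (‖(1 / K : ℝ) • X‖ + ‖u‖) :=
          (norm_add_le _ _).trans (add_le_add (norm_sub_le _ _) (norm_sub_le _ _))
        _ < 2 * ρ := by linarith [hdev j, hdev (j + 1)]
    refine .head (latticeStep_add v (mem_ball_iff_norm.2 (by linarith)) hu) ?_
    rw [hyT]
    have hball : ball (y j + u) R ⊆ ball a (2 * ρ + R) :=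
      ball_subset_ball' (by rw [dist_eq_norm]; linarith)
    exact ReflTransGen.mono (fun _ _ => LatticeStep.mono v hball) _ _ (ih _ _ hT)
  simpa [hy0, hyK] using reflTransGen_of_forall_lt_succ hlink

theorem reflTransGen_latticeStep_ball (v : ι → E) (S : Finset ι) (c : ι → ℤ) {ρ : ℝ}
    (hρ : ∑ k ∈ S, ‖v k‖ ≤ ρ) (hX : ‖∑ k ∈ S, (c k : ℝ) • v k‖ < ρ) (a : E) :
    ReflTransGen (LatticeStep v (ball a (4 ^ (S.card - 1) * ρ))) a
      (a + ∑ k ∈ S, (c k : ℝ) • v k) := by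
  classical
  induction S using Finset.induction_on generalizing c ρ a with
  | empty => rw [sum_empty, add_zero]
  | @insert i S hi ih =>
    have hρ0 : 0 ≤ ρ := (norm_nonneg _).trans hX.le
    rw [sum_insert hi] at hρ hX ⊢
    have hρS : ∑ k ∈ S, ‖v k‖ ≤ ρ := by linarith [norm_nonneg (v i)]
    rw [card_insert_of_notMem hi, Nat.add_sub_cancel, add_comm ((c i : ℝ) • v i)] at *
    by_cases hci : c i = 0
    · rw [hci, Int.cast_zero, zero_smul, add_zero] at hX ⊢
      have hpow : 4 ^ (S.card - 1) * ρ ≤ 4 ^ S.card * ρ := by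
        gcongr
        · norm_num
        · omega
      exact ReflTransGen.mono (fun _ _ => LatticeStep.mono v (ball_subset_ball hpow)) _ _
        (ih c hρS hX a)
    obtain ⟨K, hK, u, hu, hKU⟩ := exists_natCast_smul_eq_intCast_smul hci (v i)
    have hu' : ∃ k, u = v k ∨ u = -v k := ⟨i, hu⟩
    have hnu : ‖u‖ = ‖v i‖ := by rcases hu with rfl | rfl <;> simp
    rw [hKU] at hX ⊢
    rcases S.eq_empty_or_nonempty with rfl | hS
    · simpa using reflTransGen_latticeStep_add_smul v hu' K (by simpa using hX) a
    · have hpow : 2 * ρ + 4 ^ (S.card - 1) * (2 * ρ) ≤ 4 ^ S.card * ρ := by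
        obtain ⟨m, hm⟩ : ∃ m, S.card = m + 1 := ⟨_, (Nat.sub_add_cancel hS.card_pos).symm⟩
        have h1 : (1 : ℝ) ≤ 4 ^ m := one_le_pow₀ (by norm_num)
        rw [hm, Nat.add_sub_cancel, pow_succ]
        nlinarith
      refine ReflTransGen.mono (fun _ _ => LatticeStep.mono v (ball_subset_ball hpow)) _ _
        (reflTransGen_latticeStep_sum_add_smul v hu' hK (by positivity) (by linarith) hX
          (fun d b hd => ih d (by linarith) hd b) a)

end

theorem lattice_path_general (N : ℕ)
    (v : Fin N → EuclideanSpace ℝ (Fin N))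
    (ρ : ℝ) (hρ : ∑ k, ‖v k‖ ≤ ρ)
    (x x' : EuclideanSpace ℝ (Fin N))
    (hx : ∃ m : Fin N → ℤ, x = ∑ k, (m k : ℝ) • v k)
    (hx' : ∃ m : Fin N → ℤ, x' = ∑ k, (m k : ℝ) • v k)
    (hdist : dist x x' < ρ) :
    ∃ (n : ℕ) (w : ℕ → EuclideanSpace ℝ (Fin N)),
      w 0 = x' ∧ w n = x ∧
      (∀ ℓ ≤ n, dist (w ℓ) x' < 4 ^ (N - 1) * ρ) ∧
      (∀ ℓ, 1 ≤ ℓ → ℓ ≤ n → ∃ k : Fin N, w ℓ - w (ℓ - 1) = v k ∨ w ℓ - w (ℓ - 1) = -v k) := by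
  obtain ⟨m, rfl⟩ := hx
  obtain ⟨m', rfl⟩ := hx'
  have hdiff : ∑ k, ((m k - m' k : ℤ) : ℝ) • v k =
      ∑ k, (m k : ℝ) • v k - ∑ k, (m' k : ℝ) • v k := by
    simp only [Int.cast_sub, sub_smul, sum_sub_distrib]
  have hpath := reflTransGen_latticeStep_ball v Finset.univ (m - m') hρ
    (by rwa [Pi.sub_def, hdiff, ← dist_eq_norm]) (∑ k, (m' k : ℝ) • v k)
  rw [Pi.sub_def, hdiff, add_sub_cancel, card_univ, Fintype.card_fin] at hpath
  obtain ⟨n, w, hw0, hwn, hw⟩ := hpath.exists_seq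
  have hρ0 : 0 < ρ := dist_nonneg.trans_lt hdist
  refine ⟨n, w, hw0, hwn, fun ℓ hℓ => ?_, fun ℓ h1 hℓ => ?_⟩
  · cases ℓ with
    | zero => rw [hw0, dist_self]; positivity
    | succ ℓ => exact (hw ℓ hℓ).1
  · obtain ⟨ℓ, rfl⟩ := Nat.exists_eq_add_of_le' h1
    exact (hw ℓ hℓ).2

/-- Lemma (lattice paths): for linearly independent `v 0, …, v (N-1)` generating
the lattice `G`, every `ρ ≥ ∑ ‖v k‖` and all lattice points `x, x'` with
`|x - x'| < ρ`, there is a `G`-path `w 0 = x', …, w n = x` inside the ball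
`B_{4^(N-1) ρ}(x')` with steps in `{± v 1, …, ± v N}`. -/
theorem lattice_path (N : ℕ)
    (v : Fin N → EuclideanSpace ℝ (Fin N))
    (hv : LinearIndependent ℝ v)
    (ρ : ℝ) (hρ : ∑ k, ‖v k‖ ≤ ρ)
    (x x' : EuclideanSpace ℝ (Fin N))
    (hx : ∃ m : Fin N → ℤ, x = ∑ k, (m k : ℝ) • v k)
    (hx' : ∃ m : Fin N → ℤ, x' = ∑ k, (m k : ℝ) • v k)
    (hdist : dist x x' < ρ) :
    ∃ (n : ℕ) (w : ℕ → EuclideanSpace ℝ (Fin N)),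
      w 0 = x' ∧ w n = x ∧
      (∀ ℓ ≤ n, dist (w ℓ) x' < 4 ^ (N - 1) * ρ) ∧
      (∀ ℓ, 1 ≤ ℓ → ℓ ≤ n → ∃ k : Fin N, w ℓ - w (ℓ - 1) = v k ∨ w ℓ - w (ℓ - 1) = -v k) :=
  lattice_path_general N v ρ hρ x x' hx hx' hdist
end

section
/- Let $J : \mathbb{R}^N \times \mathbb{R}^N \to [0,\infty]$ be measurable and symmetric, and let $\Omega \subset \mathbb{R}^N$ be open. For any $u \in \mathcal{V}^J(\Omega)$ and $v \in \mathcal{D}^J(\Omega)$, one has $\int_{\mathbb{R}^N}\int_{\mathbb{R}^N} |u(x)-u(y)|\,|v(x)-v(y)|\,J(x,y)\,dx\,dy \le (2+\sqrt{2})\,\rho(u,\Omega)^{1/2}\,\mathcal{E}_J(v,v)^{1/2} < \infty$. -/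
/-!
Write `|u x - u y| |v x - v y| J = (|u x - u y| J^{1/2}) (|v x - v y| J^{1/2})`. Since `v` vanishes
off `Ω`, this vanishes unless `x ∈ Ω` or `y ∈ Ω`, so Cauchy–Schwarz may be applied on
`Ω × ℝᴺ ∪ ℝᴺ × Ω`. By the symmetry of `J`, the `u`-factor there is at most `2 ∫_Ω ∫ (u x - u y)² J`,
which gives the bound with constant `2√2 ≤ 2 + √2`.
-/

open MeasureTheory ENNReal Set

noncomputable section

variable {N : ℕ}

/-- `ρ(u,Ω) = ½ ∫_Ω ∫_{ℝ^N} (u(x)-u(y))² J(x,y) dy dx`. -/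
def rhoForm (J : EuclideanSpace ℝ (Fin N) → EuclideanSpace ℝ (Fin N) → ℝ≥0∞)
    (Ω : Set (EuclideanSpace ℝ (Fin N))) (u : EuclideanSpace ℝ (Fin N) → ℝ) : ℝ≥0∞ :=
  (1 / 2) * ∫⁻ x in Ω, ∫⁻ y, ENNReal.ofReal ((u x - u y) ^ 2) * J x y

/-- `ℰ_J(v,v) = ½ ∫∫ (v(x)-v(y))² J(x,y) dx dy`. -/
def energyForm (J : EuclideanSpace ℝ (Fin N) → EuclideanSpace ℝ (Fin N) → ℝ≥0∞)
    (v : EuclideanSpace ℝ (Fin N) → ℝ) : ℝ≥0∞ :=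
  (1 / 2) * ∫⁻ x, ∫⁻ y, ENNReal.ofReal ((v x - v y) ^ 2) * J x y

lemma ENNReal.rpow_half_mul_rpow_half (w : ℝ≥0∞) : w ^ (1 / 2 : ℝ) * w ^ (1 / 2 : ℝ) = w := by
  rw [← ENNReal.rpow_add_of_nonneg _ _ (by norm_num) (by norm_num)]
  norm_num

section JumpWeight

variable {α : Type*}

def jumpWeight (J : α → α → ℝ≥0∞) (u : α → ℝ) (p : α × α) : ℝ≥0∞ :=
  ENNReal.ofReal |u p.1 - u p.2| * J p.1 p.2 ^ (1 / 2 : ℝ)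

lemma jumpWeight_mul_jumpWeight (J : α → α → ℝ≥0∞) (u v : α → ℝ) (p : α × α) :
    jumpWeight J u p * jumpWeight J v p
      = ENNReal.ofReal (|u p.1 - u p.2| * |v p.1 - v p.2|) * J p.1 p.2 := by
  rw [jumpWeight, jumpWeight, mul_mul_mul_comm, ENNReal.rpow_half_mul_rpow_half,
    ← ENNReal.ofReal_mul (abs_nonneg _)]

lemma jumpWeight_rpow_two (J : α → α → ℝ≥0∞) (u : α → ℝ) (p : α × α) :
    jumpWeight J u p ^ (2 : ℝ) = ENNReal.ofReal ((u p.1 - u p.2) ^ 2) * J p.1 p.2 := by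
  rw [ENNReal.rpow_two, sq, jumpWeight_mul_jumpWeight, abs_mul_abs_self, sq]

lemma jumpWeight_swap {J : α → α → ℝ≥0∞} (hJ : ∀ x y, J x y = J y x) (u : α → ℝ) (p : α × α) :
    jumpWeight J u p.swap = jumpWeight J u p := by
  rw [jumpWeight, jumpWeight, Prod.fst_swap, Prod.snd_swap, abs_sub_comm, hJ]

lemma support_jumpWeight_subset {J : α → α → ℝ≥0∞} {Ω : Set α} {v : α → ℝ}
    (hv : ∀ x ∉ Ω, v x = 0) :
    Function.support (jumpWeight J v) ⊆ Ω ×ˢ univ ∪ univ ×ˢ Ω := by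
  intro p hp
  by_contra h
  simp only [mem_union, mem_prod, mem_univ, and_true, true_and, not_or] at h
  simp [jumpWeight, hv _ h.1, hv _ h.2] at hp

lemma measurable_jumpWeight [MeasurableSpace α] {J : α → α → ℝ≥0∞}
    (hJ : Measurable fun p : α × α => J p.1 p.2) {u : α → ℝ} (hu : Measurable u) :
    Measurable (jumpWeight J u) := by
  unfold jumpWeight
  fun_prop

end JumpWeight

section ProductMeasure

variable {α : Type*} [MeasurableSpace α] {μ : Measure α} [SFinite μ]

lemma setLIntegral_prod_union_le_two_mul {K : α × α → ℝ≥0∞} (hK : Measurable K)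
    (hsymm : ∀ p, K p.swap = K p) (Ω : Set α) :
    ∫⁻ p in Ω ×ˢ univ ∪ univ ×ˢ Ω, K p ∂μ.prod μ ≤ 2 * ∫⁻ x in Ω, ∫⁻ y, K (x, y) ∂μ ∂μ := by
  have hleft : ∫⁻ p in Ω ×ˢ univ, K p ∂μ.prod μ = ∫⁻ x in Ω, ∫⁻ y, K (x, y) ∂μ ∂μ := by
    rw [← Measure.restrict_prod_eq_prod_univ, lintegral_prod _ hK.aemeasurable]
  have hright : ∫⁻ p in univ ×ˢ Ω, K p ∂μ.prod μ = ∫⁻ p in Ω ×ˢ univ, K p ∂μ.prod μ := by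
    rw [← Measure.restrict_prod_eq_prod_univ, ← Measure.prod_restrict, Measure.restrict_univ,
      ← lintegral_prod_swap]
    simp only [hsymm]
  calc ∫⁻ p in Ω ×ˢ univ ∪ univ ×ˢ Ω, K p ∂μ.prod μ
      ≤ ∫⁻ p in Ω ×ˢ univ, K p ∂μ.prod μ + ∫⁻ p in univ ×ˢ Ω, K p ∂μ.prod μ :=
        lintegral_union_le _ _ _
    _ = 2 * ∫⁻ x in Ω, ∫⁻ y, K (x, y) ∂μ ∂μ := by rw [hright, hleft, two_mul]

theorem lintegral_lintegral_mul_abs_sub_le {J : α → α → ℝ≥0∞}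
    (hJmeas : Measurable fun p : α × α => J p.1 p.2) (hJsym : ∀ x y, J x y = J y x)
    {Ω : Set α} {u v : α → ℝ} (hu : Measurable u) (hv : Measurable v) (hv0 : ∀ x ∉ Ω, v x = 0) :
    ∫⁻ x, ∫⁻ y, ENNReal.ofReal (|u x - u y| * |v x - v y|) * J x y ∂μ ∂μ
      ≤ (2 * ∫⁻ x in Ω, ∫⁻ y, ENNReal.ofReal ((u x - u y) ^ 2) * J x y ∂μ ∂μ) ^ (1 / 2 : ℝ)
        * (∫⁻ x, ∫⁻ y, ENNReal.ofReal ((v x - v y) ^ 2) * J x y ∂μ ∂μ) ^ (1 / 2 : ℝ) := by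
  have hU := measurable_jumpWeight hJmeas hu
  have hV := measurable_jumpWeight hJmeas hv
  calc ∫⁻ x, ∫⁻ y, ENNReal.ofReal (|u x - u y| * |v x - v y|) * J x y ∂μ ∂μ
      = ∫⁻ p in Ω ×ˢ univ ∪ univ ×ˢ Ω, (jumpWeight J u * jumpWeight J v) p ∂μ.prod μ := by
        rw [setLIntegral_eq_of_support_subset (f := jumpWeight J u * jumpWeight J v)
            ((Function.support_mul_subset_right _ _).trans (support_jumpWeight_subset hv0)),
          lintegral_prod _ (hU.mul hV).aemeasurable]
        simp only [Pi.mul_apply, jumpWeight_mul_jumpWeight]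
    _ ≤ (∫⁻ p in Ω ×ˢ univ ∪ univ ×ˢ Ω, jumpWeight J u p ^ (2 : ℝ) ∂μ.prod μ) ^ (1 / 2 : ℝ)
        * (∫⁻ p in Ω ×ˢ univ ∪ univ ×ˢ Ω, jumpWeight J v p ^ (2 : ℝ) ∂μ.prod μ) ^ (1 / 2 : ℝ) :=
        ENNReal.lintegral_mul_le_Lp_mul_Lq _ .two_two hU.aemeasurable hV.aemeasurable
    _ ≤ (2 * ∫⁻ x in Ω, ∫⁻ y, jumpWeight J u (x, y) ^ (2 : ℝ) ∂μ ∂μ) ^ (1 / 2 : ℝ)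
        * (∫⁻ p, jumpWeight J v p ^ (2 : ℝ) ∂μ.prod μ) ^ (1 / 2 : ℝ) := by
        gcongr
        · exact setLIntegral_prod_union_le_two_mul (hU.pow_const _)
            (fun p => by rw [jumpWeight_swap hJsym]) Ω
        · exact Measure.restrict_le_self
    _ = (2 * ∫⁻ x in Ω, ∫⁻ y, ENNReal.ofReal ((u x - u y) ^ 2) * J x y ∂μ ∂μ) ^ (1 / 2 : ℝ)
        * (∫⁻ x, ∫⁻ y, ENNReal.ofReal ((v x - v y) ^ 2) * J x y ∂μ ∂μ) ^ (1 / 2 : ℝ) := by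
        rw [lintegral_prod _ (hV.pow_const _).aemeasurable]
        simp only [jumpWeight_rpow_two]

end ProductMeasure

lemma ENNReal.two_mul_half_mul (a : ℝ≥0∞) : 2 * (1 / 2 * a) = a := by
  rw [← mul_assoc, ENNReal.mul_div_cancel two_ne_zero ofNat_ne_top, one_mul]

lemma ENNReal.rpow_half_two_mul_two_mul_le (a b : ℝ≥0∞) :
    (2 * (2 * a)) ^ (1 / 2 : ℝ) * (2 * b) ^ (1 / 2 : ℝ)
      ≤ ENNReal.ofReal (2 + √2) * a ^ (1 / 2 : ℝ) * b ^ (1 / 2 : ℝ) := by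
  have hsqrt : (2 : ℝ≥0∞) ^ (1 / 2 : ℝ) = ENNReal.ofReal √2 := by
    rw [← ENNReal.ofReal_ofNat, ENNReal.ofReal_rpow_of_nonneg zero_le_two (by norm_num),
      Real.sqrt_eq_rpow]
  have hconst : 2 * ENNReal.ofReal √2 ≤ ENNReal.ofReal (2 + √2) := by
    rw [← ENNReal.ofReal_ofNat, ← ENNReal.ofReal_mul zero_le_two]
    gcongr
    nlinarith [Real.sq_sqrt (zero_le_two : (0 : ℝ) ≤ 2), Real.sqrt_nonneg 2]
  calc (2 * (2 * a)) ^ (1 / 2 : ℝ) * (2 * b) ^ (1 / 2 : ℝ)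
      = 2 ^ (1 / 2 : ℝ) * 2 ^ (1 / 2 : ℝ) * 2 ^ (1 / 2 : ℝ)
          * a ^ (1 / 2 : ℝ) * b ^ (1 / 2 : ℝ) := by
        simp only [ENNReal.mul_rpow_of_nonneg _ _ (by norm_num : (0 : ℝ) ≤ 1 / 2)]
        ring
    _ ≤ ENNReal.ofReal (2 + √2) * a ^ (1 / 2 : ℝ) * b ^ (1 / 2 : ℝ) := by
        rw [ENNReal.rpow_half_mul_rpow_half, hsqrt]
        gcongr

theorem testing_estimate_general
    (J : EuclideanSpace ℝ (Fin N) → EuclideanSpace ℝ (Fin N) → ℝ≥0∞)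
    (hJmeas : Measurable fun p : EuclideanSpace ℝ (Fin N) × EuclideanSpace ℝ (Fin N) => J p.1 p.2)
    (hJsym : ∀ x y, J x y = J y x)
    (Ω : Set (EuclideanSpace ℝ (Fin N)))
    (u v : EuclideanSpace ℝ (Fin N) → ℝ)
    (hu : Measurable u) (hv : Measurable v)
    -- `u ∈ 𝒱^J(Ω)`:
    (huρ : rhoForm J Ω u < ⊤)
    -- `v ∈ 𝒟^J(Ω)`:
    (hvE : energyForm J v < ⊤) (hv0 : ∀ x ∉ Ω, v x = 0) :
    (∫⁻ x, ∫⁻ y, ENNReal.ofReal (|u x - u y| * |v x - v y|) * J x y)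
        ≤ ENNReal.ofReal (2 + Real.sqrt 2) * (rhoForm J Ω u) ^ (1 / 2 : ℝ)
            * (energyForm J v) ^ (1 / 2 : ℝ) ∧
    ENNReal.ofReal (2 + Real.sqrt 2) * (rhoForm J Ω u) ^ (1 / 2 : ℝ)
        * (energyForm J v) ^ (1 / 2 : ℝ) < ⊤ := by
  have hρ : ∫⁻ x in Ω, ∫⁻ y, ENNReal.ofReal ((u x - u y) ^ 2) * J x y = 2 * rhoForm J Ω u :=
    (ENNReal.two_mul_half_mul _).symm
  have hE : ∫⁻ x, ∫⁻ y, ENNReal.ofReal ((v x - v y) ^ 2) * J x y = 2 * energyForm J v :=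
    (ENNReal.two_mul_half_mul _).symm
  have key := lintegral_lintegral_mul_abs_sub_le (μ := volume) hJmeas hJsym hu hv hv0
  rw [hρ, hE] at key
  refine ⟨key.trans (ENNReal.rpow_half_two_mul_two_mul_le _ _), ?_⟩
  exact ENNReal.mul_lt_top (ENNReal.mul_lt_top ofReal_lt_top
    (ENNReal.rpow_lt_top_of_nonneg (by norm_num) huρ.ne))
    (ENNReal.rpow_lt_top_of_nonneg (by norm_num) hvE.ne)

/-- Lemma (testing): for `u ∈ 𝒱^J(Ω)` and `v ∈ 𝒟^J(Ω)`,
`∫∫ |u(x)-u(y)| |v(x)-v(y)| J(x,y) dx dy ≤ (2+√2) ρ(u,Ω)^{1/2} ℰ_J(v,v)^{1/2} < ∞`. -/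
theorem testing_estimate
    (J : EuclideanSpace ℝ (Fin N) → EuclideanSpace ℝ (Fin N) → ℝ≥0∞)
    (hJmeas : Measurable fun p : EuclideanSpace ℝ (Fin N) × EuclideanSpace ℝ (Fin N) => J p.1 p.2)
    (hJsym : ∀ x y, J x y = J y x)
    (Ω : Set (EuclideanSpace ℝ (Fin N))) (hΩ : IsOpen Ω)
    (u v : EuclideanSpace ℝ (Fin N) → ℝ)
    (hu : Measurable u) (hv : Measurable v)
    -- `u ∈ 𝒱^J(Ω)`:
    (huρ : rhoForm J Ω u < ⊤)
    -- `v ∈ 𝒟^J(Ω)`: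
    (hvE : energyForm J v < ⊤) (hv0 : ∀ x ∉ Ω, v x = 0) :
    (∫⁻ x, ∫⁻ y, ENNReal.ofReal (|u x - u y| * |v x - v y|) * J x y)
        ≤ ENNReal.ofReal (2 + Real.sqrt 2) * (rhoForm J Ω u) ^ (1 / 2 : ℝ)
            * (energyForm J v) ^ (1 / 2 : ℝ) ∧
    ENNReal.ofReal (2 + Real.sqrt 2) * (rhoForm J Ω u) ^ (1 / 2 : ℝ)
        * (energyForm J v) ^ (1 / 2 : ℝ) < ⊤ :=
  testing_estimate_general J hJmeas hJsym Ω u v hu hv huρ hvE hv0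

end
end
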